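/- arXiv:2401.04199 — 2 statements merged into one kernel-verified Lean document; each statement's English description precedes it below -/
import Mathlib

section
/- Let F ∈ ℤ[x], ℓ a prime, and write F(x) = ℓ^t G(x) + c₀ where c₀ is the constant term of F, t is the largest nonnegative integer with ℓ^t dividing all non-constant coefficients of F, and G ∈ ℤ[x] has content not divisible by ℓ. Then for every integer k > t, |∑_{v mod ℓ^k, gcd(v,ℓ)=1} exp(2πi F(v)/ℓ^k)| = ℓ^t · |∑_{v mod ℓ^{k−t}, gcd(v,ℓ)=1} exp(2πi G(v)/ℓ^{k−t})|. -/
/-!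
Since `F(v) = ℓ^t G(v) + c₀`, each term of the sum for `F` is the unimodular constant
`e(c₀/ℓ^k)` times `e(G(v)/ℓ^(k-t))`. The latter depends only on `v mod ℓ^(k-t)`, as does the
condition `ℓ ∤ v` because `k - t ≥ 1`, so the reduced residues mod `ℓ^k` contribute `ℓ^t` copies
of the sum for `G` mod `ℓ^(k-t)`.
-/

open Finset Polynomial Complex Real

lemma Complex.exp_two_pi_I_mul_int_div_eq_of_modEq {n : ℕ} {a b : ℤ} (h : a ≡ b [ZMOD n]) :
    exp (2 * π * I * a / n) = exp (2 * π * I * b / n) := by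
  rcases eq_or_ne n 0 with rfl | hn
  · simp
  obtain ⟨q, hq⟩ := h.dvd
  refine exp_eq_exp_iff_exists_int.2 ⟨-q, ?_⟩
  have hq' : (b : ℂ) = a + n * q := by
    rw [← sub_eq_iff_eq_add']; exact_mod_cast hq
  rw [hq']
  field_simp
  push_cast
  ring

lemma Complex.exp_two_pi_I_mul_pow_mul_add_div {x : ℂ} (hx : x ≠ 0) (a c : ℂ) (t m : ℕ) :
    exp (2 * π * I * (x ^ t * a + c) / x ^ (t + m)) =
      exp (2 * π * I * c / x ^ (t + m)) * exp (2 * π * I * a / x ^ m) := by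
  rw [← exp_add, pow_add]
  congr 1
  field_simp
  ring

lemma Complex.norm_exp_two_pi_I_mul_int_div_pow (a : ℤ) (n k : ℕ) :
    ‖exp (2 * π * I * a / (n : ℂ) ^ k)‖ = 1 := by
  have : 2 * π * I * a / (n : ℂ) ^ k = ((2 * π * a / (n : ℝ) ^ k : ℝ) : ℂ) * I := by
    push_cast; ring
  rw [this, norm_exp_ofReal_mul_I]

lemma Polynomial.periodic_exp_two_pi_I_mul_eval_div (P : ℤ[X]) (n : ℕ) :
    Function.Periodic (fun v : ℕ => exp (2 * π * I * ((P.eval (v : ℤ) : ℤ) : ℂ) / n)) n := by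
  intro v
  refine exp_two_pi_I_mul_int_div_eq_of_modEq (Int.modEq_iff_dvd.2 ?_).symm
  simpa using sub_dvd_eval_sub ((v : ℤ) + n) v P

lemma Function.Periodic.sum_range_mul {M : Type*} [AddCommMonoid M] {f : ℕ → M} {N : ℕ}
    (hf : Function.Periodic f N) (a : ℕ) :
    ∑ v ∈ range (a * N), f v = a • ∑ v ∈ range N, f v := by
  induction a with
  | zero => simp
  | succ a ih =>
    rw [add_mul, one_mul, sum_range_add, ih, succ_nsmul]
    congr 1
    exact sum_congr rfl fun x _ => by simpa [add_comm] using hf.nat_mul a x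

lemma Function.Periodic.sum_filter_not_dvd_range_pow_add {M : Type*} [AddCommMonoid M]
    {f : ℕ → M} {ℓ m : ℕ} (hm : m ≠ 0) (hf : Function.Periodic f (ℓ ^ m)) (t : ℕ) :
    ∑ v ∈ (range (ℓ ^ (t + m))).filter (fun v => ¬ ℓ ∣ v), f v =
      ℓ ^ t • ∑ v ∈ (range (ℓ ^ m)).filter (fun v => ¬ ℓ ∣ v), f v := by
  simp only [sum_filter, pow_add]
  refine Function.Periodic.sum_range_mul (fun v => ?_) _
  simp only [hf v, Nat.dvd_add_left (dvd_pow_self ℓ hm)]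

theorem stmt6_general (F G : Polynomial ℤ) (ℓ : ℕ) (hℓ : ℓ.Prime)
    (t : ℕ) (hFG : F = C ((ℓ : ℤ) ^ t) * G + C (F.coeff 0))
    (k : ℕ) (hk : t < k) :
    ‖∑ v ∈ (Finset.range (ℓ ^ k)).filter (fun v => ¬ ℓ ∣ v),
        Complex.exp (2 * Real.pi * Complex.I * ((F.eval (v : ℤ) : ℤ) : ℂ) / ((ℓ : ℂ) ^ k))‖ =
      (ℓ : ℝ) ^ t *
        ‖∑ v ∈ (Finset.range (ℓ ^ (k - t))).filter (fun v => ¬ ℓ ∣ v),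
          Complex.exp (2 * Real.pi * Complex.I * ((G.eval (v : ℤ) : ℤ) : ℂ) / ((ℓ : ℂ) ^ (k - t)))‖ := by
  obtain ⟨m, rfl⟩ := Nat.exists_eq_add_of_le hk.le
  have hm : m ≠ 0 := by omega
  have hFeval (v : ℤ) : F.eval v = ℓ ^ t * G.eval v + F.coeff 0 := by
    conv_lhs => rw [hFG]
    simp
  have hG : Function.Periodic
      (fun v : ℕ => exp (2 * π * I * ((G.eval (v : ℤ) : ℤ) : ℂ) / (ℓ : ℂ) ^ m)) (ℓ ^ m) := by
    simpa using G.periodic_exp_two_pi_I_mul_eval_div (ℓ ^ m)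
  simp only [Nat.add_sub_cancel_left, hFeval, Int.cast_add, Int.cast_mul, Int.cast_pow,
    Int.cast_natCast, exp_two_pi_I_mul_pow_mul_add_div (Nat.cast_ne_zero.2 hℓ.ne_zero)]
  rw [← mul_sum, norm_mul, norm_exp_two_pi_I_mul_int_div_pow, one_mul,
    hG.sum_filter_not_dvd_range_pow_add hm, nsmul_eq_mul, norm_mul, Complex.norm_natCast, Nat.cast_pow]

/-- If `F = ℓ^t · G + c₀` with `ℓ` not dividing the content of `G`, then for `k > t`
the exponential sum for `F` mod `ℓ^k` has modulus `ℓ^t` times that for `G` mod `ℓ^(k-t)`. -/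
theorem stmt6 (F G : Polynomial ℤ) (hF : 0 < F.natDegree) (ℓ : ℕ) (hℓ : ℓ.Prime)
    (t : ℕ) (hFG : F = C ((ℓ : ℤ) ^ t) * G + C (F.coeff 0))
    (hcont : ¬ (ℓ : ℤ) ∣ G.content) (k : ℕ) (hk : t < k) :
    ‖∑ v ∈ (Finset.range (ℓ ^ k)).filter (fun v => ¬ ℓ ∣ v),
        Complex.exp (2 * Real.pi * Complex.I * ((F.eval (v : ℤ) : ℤ) : ℂ) / ((ℓ : ℂ) ^ k))‖ =
      (ℓ : ℝ) ^ t *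
        ‖∑ v ∈ (Finset.range (ℓ ^ (k - t))).filter (fun v => ¬ ℓ ∣ v),
          Complex.exp (2 * Real.pi * Complex.I * ((G.eval (v : ℤ) : ℤ) : ℂ) / ((ℓ : ℂ) ^ (k - t)))‖ :=
  stmt6_general F G ℓ hℓ t hFG k hk
end

section
/- Let J = ⌊log log log x⌋ and y = exp((log x)^{ε/2}) for fixed ε ∈ (0,1]. The number of positive integers n ≤ x that are not convenient (i.e., either some of the J largest prime factors of n with multiplicity is at most y, or one of them is repeated) is o(x) as x → ∞. -/
/-!
If no `d > y` has `d²` dividing `n ≤ x`, and `n` has at least `J` distinct prime factors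
`> y`, then `n` is convenient: its `J` largest such primes serve as `P₁ > ⋯ > P_J`.
At most `2x/y` integers `n ≤ x` are divisible by some `d²` with `d > y`. For the others, the
number of prime factors of `n` in `(y, x]` has mean `≈ μ = ∑_{y<p≤x} 1/p` and variance at
most `3μ` (Turán–Kubilius), so by Chebyshev's inequality at most `12x/μ` of them have fewer
than `J ≤ μ/2` such factors. Chebyshev's bound `π(2^k) ≥ 2^k/k - 2`, summed over dyadic
blocks, gives `μ ≥ (log log x - log log y)/2 - 5 ≥ (log log x)/4 - 5` (as
`log log y = (ε/2) log log x`), which dominates `J = ⌊log log log x⌋` and tends to infinity.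
-/

open Filter Finset

/-- The largest prime factor of `m`, with the convention `P(1) = 1`. -/
def largestPrimeFactor (m : ℕ) : ℕ := max 1 (m.primeFactors.sup id)

/-- `n` is convenient (parameters `x`, `y`, `J`): `n = m·P₁⋯P_J` with
`P₁ > ⋯ > P_J` distinct primes, each `P_j > max{P(m), y}`, and `P₁⋯P_J ≤ x/m`. -/
def Convenient (x y : ℝ) (J n : ℕ) : Prop :=
  ∃ m : ℕ, ∃ P : Fin J → ℕ, 0 < m ∧ (∀ j, (P j).Prime) ∧
    (∀ i j : Fin J, i < j → P j < P i) ∧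
    (∀ j, y < (P j : ℝ) ∧ largestPrimeFactor m < P j) ∧
    n = m * ∏ j, P j ∧ ((∏ j, P j : ℕ) : ℝ) ≤ x / (m : ℝ)

open scoped Nat.Prime

theorem Finset.exists_strictAnti_of_le_card {α : Type*} [LinearOrder α] (S : Finset α) {J : ℕ}
    (hJ : J ≤ #S) :
    ∃ P : Fin J → α, StrictAnti P ∧ (∀ j, P j ∈ S) ∧
      ∀ s ∈ S, s ∉ Set.range P → ∀ j, s < P j := by
  set e := S.orderEmbOfFin rfl
  refine ⟨fun j => e ⟨#S - 1 - j, by omega⟩, fun i j hij => e.strictMono ?_,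
    fun j => S.orderEmbOfFin_mem rfl _, fun s hs hP j => ?_⟩
  · simp only [Fin.lt_def] at hij ⊢
    omega
  obtain ⟨k, rfl⟩ : s ∈ Set.range e := by rwa [S.range_orderEmbOfFin]
  refine e.strictMono (Fin.lt_def.2 ?_)
  simp only
  by_contra! hk
  exact hP ⟨⟨#S - 1 - k, by omega⟩, congrArg e (Fin.ext (by simp only; omega))⟩

theorem largestPrimeFactor_lt {m p : ℕ} (hp : 1 < p) (h : ∀ q ∈ m.primeFactors, q < p) :
    largestPrimeFactor m < p :=
  max_lt hp ((Finset.sup_lt_iff (Nat.zero_lt_of_lt hp)).2 h)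

theorem convenient_of_le_card_primeFactors {x y : ℝ} {J n : ℕ} (hn : 0 < n)
    (hnx : (n : ℝ) ≤ x) (hsq : ∀ p : ℕ, p.Prime → y < p → ¬ p ^ 2 ∣ n)
    (hJ : J ≤ #{p ∈ n.primeFactors | y < ((p : ℕ) : ℝ)}) :
    Convenient x y J n := by
  obtain ⟨P, hanti, hPS, hlarger⟩ := exists_strictAnti_of_le_card _ hJ
  have hPn : ∀ j, P j ∈ n.primeFactors := fun j => (mem_filter.1 (hPS j)).1
  have hprime : ∀ j, (P j).Prime := fun j => Nat.prime_of_mem_primeFactors (hPn j)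
  obtain ⟨m, hm⟩ : ∏ j, P j ∣ n := by
    rw [← prod_image (s := univ) (f := fun p => p) fun i _ j _ h => hanti.injective h]
    refine prod_primes_dvd n (fun p hp => ?_) fun p hp => ?_ <;>
      obtain ⟨j, -, rfl⟩ := mem_image.1 hp
    exacts [(hprime j).prime, Nat.dvd_of_mem_primeFactors (hPn j)]
  have hm0 : 0 < m := Nat.pos_of_ne_zero (by rintro rfl; rw [mul_zero] at hm; omega)
  have hsmall : ∀ q ∈ m.primeFactors, ∀ j, q < P j := by
    intro q hq j
    have hqm := Nat.dvd_of_mem_primeFactors hq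
    have hqp := Nat.prime_of_mem_primeFactors hq
    by_cases hqy : y < q
    · refine hlarger q (mem_filter.2 ⟨Nat.mem_primeFactors.2 ⟨hqp, ?_, hn.ne'⟩, hqy⟩) ?_ j
      · exact hm ▸ dvd_mul_of_dvd_right hqm _
      · rintro ⟨i, rfl⟩
        refine hsq _ hqp hqy ?_
        rw [hm, sq]
        exact mul_dvd_mul (dvd_prod_of_mem _ (mem_univ i)) hqm
    · exact_mod_cast (not_lt.1 hqy).trans_lt (mem_filter.1 (hPS j)).2
  refine ⟨m, P, hm0, hprime, fun i j hij => hanti hij, fun j => ⟨(mem_filter.1 (hPS j)).2,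
    largestPrimeFactor_lt (hprime j).one_lt (hsmall · · j)⟩, by rw [hm, mul_comm], ?_⟩
  rw [le_div_iff₀ (by exact_mod_cast hm0)]
  exact_mod_cast hm ▸ hnx

open scoped Classical in
theorem card_filter_exists_sq_dvd_le {y : ℝ} (hy : 0 < y) (N : ℕ) :
    (#{n ∈ Ioc 0 N | ∃ d : ℕ, y < d ∧ d ^ 2 ∣ n} : ℝ) ≤ 2 * N / y := by
  have hsub : {n ∈ Ioc 0 N | ∃ d : ℕ, y < d ∧ d ^ 2 ∣ n} ⊆
      (Ioo ⌊y⌋₊ (N + 1)).biUnion fun d => {n ∈ Ioc 0 N | d ^ 2 ∣ n} := by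
    intro n hn
    obtain ⟨hnN, d, hyd, hdn⟩ := mem_filter.1 hn
    have hd : d ≤ n := (Nat.le_self_pow two_ne_zero d).trans
      (Nat.le_of_dvd (mem_Ioc.1 hnN).1 hdn)
    refine mem_biUnion.2 ⟨d, mem_Ioo.2 ⟨(Nat.floor_lt hy.le).2 hyd, ?_⟩,
      mem_filter.2 ⟨hnN, hdn⟩⟩
    have := (mem_Ioc.1 hnN).2
    omega
  calc (#{n ∈ Ioc 0 N | ∃ d : ℕ, y < d ∧ d ^ 2 ∣ n} : ℝ)
      ≤ ∑ d ∈ Ioo ⌊y⌋₊ (N + 1), ((N / d ^ 2 : ℕ) : ℝ) := by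
        simp_rw [← Nat.Ioc_filter_dvd_card_eq_div]
        exact_mod_cast (card_le_card hsub).trans card_biUnion_le
    _ ≤ ∑ d ∈ Ioo ⌊y⌋₊ (N + 1), N * ((d : ℝ) ^ 2)⁻¹ := by
        gcongr with d
        rw [← div_eq_mul_inv]
        exact_mod_cast Nat.cast_div_le
    _ ≤ N * (2 / (⌊y⌋₊ + 1)) := by
        rw [← mul_sum]
        gcongr
        exact sum_Ioo_inv_sq_le _ _
    _ ≤ 2 * N / y := by
        rw [mul_div_assoc', mul_comm]
        gcongr
        exact (Nat.lt_floor_add_one y).le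

theorem card_filter_dvd_and_dvd (N p q : ℕ) :
    #{n ∈ Ioc 0 N | p ∣ n ∧ q ∣ n} = N / p.lcm q := by
  simp_rw [← Nat.lcm_dvd_iff]
  exact Nat.Ioc_filter_dvd_card_eq_div N _

theorem card_filter_dvd_and_dvd_le {p q : ℕ} (hp : p.Prime) (hq : q.Prime) (N : ℕ) :
    (#{n ∈ Ioc 0 N | p ∣ n ∧ q ∣ n} : ℝ) ≤
      N * (p : ℝ)⁻¹ * (q : ℝ)⁻¹ + if p = q then N * (p : ℝ)⁻¹ else 0 := by
  rw [card_filter_dvd_and_dvd]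
  split_ifs with hpq
  · subst hpq
    rw [Nat.lcm_self]
    refine Nat.cast_div_le.trans ?_
    rw [div_eq_mul_inv]
    exact le_add_of_nonneg_left (by positivity)
  · rw [((Nat.coprime_primes hp hq).2 hpq).lcm_eq_mul, add_zero, mul_assoc, ← mul_inv,
      ← div_eq_mul_inv]
    exact_mod_cast Nat.cast_div_le

section TuranKubilius

variable {I : Finset ℕ} (N : ℕ)

theorem sum_card_filter_dvd_ge :
    N * ∑ p ∈ I, (p : ℝ)⁻¹ - #I ≤ ∑ n ∈ Ioc 0 N, (#{p ∈ I | p ∣ n} : ℝ) := by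
  have hswap :
      ∑ n ∈ Ioc 0 N, (#{p ∈ I | p ∣ n} : ℝ) = ∑ p ∈ I, ((N / p : ℕ) : ℝ) := by
    simp_rw [natCast_card_filter]
    rw [sum_comm]
    simp_rw [sum_boole, Nat.Ioc_filter_dvd_card_eq_div]
  rw [hswap, mul_sum, cast_card, ← sum_sub_distrib]
  gcongr with p
  rw [← div_eq_mul_inv, ← Nat.floor_div_eq_div (K := ℝ)]
  exact (Nat.sub_one_lt_floor _).le

theorem sum_sq_card_filter_dvd_le (hI : ∀ p ∈ I, p.Prime) :
    ∑ n ∈ Ioc 0 N, (#{p ∈ I | p ∣ n} : ℝ) ^ 2 ≤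
      N * (∑ p ∈ I, (p : ℝ)⁻¹) ^ 2 + N * ∑ p ∈ I, (p : ℝ)⁻¹ := by
  calc ∑ n ∈ Ioc 0 N, (#{p ∈ I | p ∣ n} : ℝ) ^ 2
      = ∑ p ∈ I, ∑ q ∈ I, (#{n ∈ Ioc 0 N | p ∣ n ∧ q ∣ n} : ℝ) := by
        simp_rw [natCast_card_filter, sq, sum_mul_sum, ite_zero_mul_ite_zero, one_mul]
        rw [sum_comm]
        exact sum_congr rfl fun p _ => sum_comm
    _ ≤ ∑ p ∈ I, ∑ q ∈ I,
          (N * (p : ℝ)⁻¹ * (q : ℝ)⁻¹ + if p = q then N * (p : ℝ)⁻¹ else 0) := by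
        gcongr with p hp q hq
        exact card_filter_dvd_and_dvd_le (hI p hp) (hI q hq) N
    _ = N * (∑ p ∈ I, (p : ℝ)⁻¹) ^ 2 + N * ∑ p ∈ I, (p : ℝ)⁻¹ := by
        rw [sum_congr rfl fun p _ => sum_add_distrib, sum_add_distrib]
        congr 1
        · simp_rw [← mul_sum, ← sum_mul, ← mul_sum]
          ring
        · rw [mul_sum]
          exact sum_congr rfl fun p hp => by rw [sum_ite_eq, if_pos hp]

theorem sum_card_filter_dvd_sub_sq_le (hI : ∀ p ∈ I, p.Prime) (hIN : #I ≤ N) :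
    ∑ n ∈ Ioc 0 N, ((#{p ∈ I | p ∣ n} : ℝ) - ∑ p ∈ I, (p : ℝ)⁻¹) ^ 2 ≤
      3 * N * ∑ p ∈ I, (p : ℝ)⁻¹ := by
  set μ := ∑ p ∈ I, (p : ℝ)⁻¹
  have hμ : 0 ≤ μ := sum_nonneg fun p _ => by positivity
  have hexpand : ∑ n ∈ Ioc 0 N, ((#{p ∈ I | p ∣ n} : ℝ) - μ) ^ 2 =
      ∑ n ∈ Ioc 0 N, (#{p ∈ I | p ∣ n} : ℝ) ^ 2
        - 2 * μ * ∑ n ∈ Ioc 0 N, (#{p ∈ I | p ∣ n} : ℝ) + N * μ ^ 2 := by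
    rw [sum_congr rfl fun n _ => (by ring : ((#{p ∈ I | p ∣ n} : ℝ) - μ) ^ 2 =
      (#{p ∈ I | p ∣ n} : ℝ) ^ 2 - 2 * μ * #{p ∈ I | p ∣ n} + μ ^ 2), sum_add_distrib,
      sum_sub_distrib, ← mul_sum, sum_const, Nat.card_Ioc, Nat.sub_zero, nsmul_eq_mul]
  have hIN' : (#I : ℝ) ≤ N := by exact_mod_cast hIN
  rw [hexpand]
  nlinarith [sum_sq_card_filter_dvd_le N hI, sum_card_filter_dvd_ge (I := I) N,
    mul_le_mul_of_nonneg_left hIN' hμ]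

theorem card_filter_card_filter_dvd_lt_le (hI : ∀ p ∈ I, p.Prime) (hIN : #I ≤ N) {J : ℕ}
    (hJ : (J : ℝ) ≤ (∑ p ∈ I, (p : ℝ)⁻¹) / 2) :
    (#{n ∈ Ioc 0 N | #{p ∈ I | p ∣ n} < J} : ℝ) ≤
      12 * N / ∑ p ∈ I, (p : ℝ)⁻¹ := by
  set μ := ∑ p ∈ I, (p : ℝ)⁻¹
  rcases (show 0 ≤ μ from sum_nonneg fun p _ => by positivity).eq_or_lt with hμ | hμ
  · have hJ0 : (J : ℝ) ≤ 0 := by linarith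
    simp [show J = 0 by exact_mod_cast hJ0.antisymm J.cast_nonneg, ← hμ]
  have hfar : ∀ n ∈ {n ∈ Ioc 0 N | #{p ∈ I | p ∣ n} < J},
      (μ / 2) ^ 2 ≤ ((#{p ∈ I | p ∣ n} : ℝ) - μ) ^ 2 := by
    intro n hn
    have : (#{p ∈ I | p ∣ n} : ℝ) + 1 ≤ J := by exact_mod_cast (mem_filter.1 hn).2
    nlinarith
  have hcount := (card_nsmul_le_sum _ _ _ hfar).trans <|
    (sum_le_sum_of_subset_of_nonneg (filter_subset _ _) fun n _ _ => sq_nonneg _).trans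
      (sum_card_filter_dvd_sub_sq_le N hI hIN)
  rw [nsmul_eq_mul] at hcount
  rw [le_div_iff₀ hμ]
  nlinarith

end TuranKubilius

theorem two_pow_div_sub_two_le_primeCounting {k : ℕ} (hk : 1 ≤ k) :
    (2 : ℝ) ^ k / k - 2 ≤ π (2 ^ k) := by
  have hk' : (1 : ℝ) ≤ k := by exact_mod_cast hk
  have hlog2 : 0 < Real.log 2 := Real.log_pos one_lt_two
  have hlog : Real.log ((2 : ℝ) ^ k + 1) ≤ (k + 1) * Real.log 2 := by
    rw [← Nat.cast_succ, ← Real.log_pow, pow_succ]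
    gcongr
    linarith [one_le_pow₀ (M₀ := ℝ) one_le_two (n := k)]
  calc (2 : ℝ) ^ k / k - 2
      ≤ ((2 : ℝ) ^ k * Real.log 2 - (k + 1) * Real.log 2) / (k * Real.log 2) := by
        rw [← sub_mul, mul_div_mul_right _ _ hlog2.ne', sub_div, add_div,
          div_self (by positivity)]
        gcongr
        linarith [(div_le_one (by positivity : (0 : ℝ) < k)).2 hk']
    _ ≤ ((2 : ℝ) ^ k * Real.log 2 - Real.log ((2 : ℝ) ^ k + 1)) /
          Real.log ((2 : ℝ) ^ k) := by
        rw [Real.log_pow]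
        gcongr
    _ ≤ π (2 ^ k) := by exact_mod_cast Chebyshev.pi_ge (2 ^ k)

theorem primeCounting_le_self (n : ℕ) : π n ≤ n := by
  rw [← Nat.primesLE_card_eq_primeCounting, Nat.primesLE_eq_filter_Ioc_zero]
  exact (card_filter_le _ _).trans (by simp)

theorem primeCounting_sub_primeCounting_div_le {m n : ℕ} (hmn : m ≤ n) :
    ((π n : ℝ) - π m) / n ≤ ∑ p ∈ Ioc m n with p.Prime, (p : ℝ)⁻¹ := by
  have hcount : (π n : ℝ) - π m = #{p ∈ Ioc m n | p.Prime} := by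
    simp_rw [← Nat.primesLE_card_eq_primeCounting, Nat.primesLE_eq_filter_Ioc_zero,
      ← Ioc_union_Ioc_eq_Ioc (Nat.zero_le m) hmn, filter_union,
      card_union_of_disjoint (disjoint_filter_filter (Ioc_disjoint_Ioc_of_le le_rfl))]
    push_cast
    ring
  rw [hcount, div_eq_mul_inv, ← nsmul_eq_mul]
  refine card_nsmul_le_sum _ _ _ fun p hp => ?_
  have hp := mem_Ioc.1 (mem_filter.1 hp).1
  exact inv_anti₀ (by exact_mod_cast hp.1.trans_le' (Nat.zero_le m)) (by exact_mod_cast hp.2)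

theorem Finset.sum_Ioc_eq_sum_Ico_sum_Ioc {M : Type*} [AddCommMonoid M] (f : ℕ → M)
    {u : ℕ → ℕ} (hu : Monotone u) {a b : ℕ} (hab : a ≤ b) :
    ∑ i ∈ Ioc (u a) (u b), f i = ∑ k ∈ Ico a b, ∑ i ∈ Ioc (u k) (u (k + 1)), f i := by
  induction b, hab using Nat.le_induction with
  | base => simp
  | succ b hab ih =>
    rw [sum_Ico_succ_top hab, ← ih, sum_Ioc_consecutive _ (hu hab) (hu b.le_succ)]

theorem log_sub_log_le_sum_Ico_inv {a b : ℕ} (ha : 1 ≤ a) (hab : a ≤ b) :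
    Real.log b - Real.log a ≤ ∑ k ∈ Ico a b, (k : ℝ)⁻¹ := by
  induction b, hab using Nat.le_induction with
  | base => simp
  | succ b hab ih =>
    have hb : (0 : ℝ) < b := by exact_mod_cast ha.trans hab
    have hstep : Real.log (b + 1) - Real.log b ≤ (b : ℝ)⁻¹ := by
      rw [← Real.log_div (by positivity) hb.ne']
      refine (Real.log_le_sub_one_of_pos (by positivity)).trans_eq ?_
      field_simp
      ring
    rw [sum_Ico_succ_top hab]
    push_cast
    linarith

theorem log_sub_log_div_two_sub_three_le_sum_inv_prime {a b : ℕ} (ha : 1 ≤ a) (hab : a ≤ b) :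
    (Real.log b - Real.log a) / 2 - 3 ≤
      ∑ p ∈ Ioc (2 ^ a : ℕ) (2 ^ b) with p.Prime, (p : ℝ)⁻¹ := by
  -- The block `(2^k, 2^(k+1)]` contributes at least `F (k + 1) - F k / 2`; summed over `k`
  -- this telescopes to `∑ F k / 2` up to `O(1)`, which needs only lower bounds on `π`.
  set F : ℕ → ℝ := fun k => π (2 ^ k) / 2 ^ k
  have hF : ∀ k ∈ Ico a b, (k : ℝ)⁻¹ - 2 * (1 / 2) ^ k ≤ F k := fun k hk => by
    have := two_pow_div_sub_two_le_primeCounting (ha.trans (mem_Ico.1 hk).1)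
    rw [le_div_iff₀ (by positivity)]
    calc ((k : ℝ)⁻¹ - 2 * (1 / 2) ^ k) * 2 ^ k = 2 ^ k / k - 2 := by
          rw [div_pow, one_pow]
          field_simp
      _ ≤ π (2 ^ k) := this
  have hFa : F a ≤ 1 := by
    rw [div_le_one (by positivity)]
    exact_mod_cast primeCounting_le_self _
  have hFb : 0 ≤ F b := by positivity
  have hgeom : ∑ k ∈ Ico a b, (1 / 2 : ℝ) ^ k ≤ 2 :=
    (sum_le_sum_of_subset_of_nonneg (fun k hk => mem_range.2 (mem_Ico.1 hk).2)
      fun _ _ _ => by positivity).trans (sum_geometric_two_le b)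
  have hsumF : Real.log b - Real.log a - 4 ≤ ∑ k ∈ Ico a b, F k := by
    refine le_trans ?_ (sum_le_sum hF)
    rw [sum_sub_distrib, ← mul_sum]
    linarith [log_sub_log_le_sum_Ico_inv ha hab]
  have hblock : ∀ k, F (k + 1) - F k / 2 ≤
      ∑ p ∈ Ioc (2 ^ k : ℕ) (2 ^ (k + 1)) with p.Prime, (p : ℝ)⁻¹ := fun k => by
    refine le_trans (le_of_eq ?_) (primeCounting_sub_primeCounting_div_le
      (Nat.pow_le_pow_right two_pos k.le_succ))
    simp only [F]
    push_cast
    field_simp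
    ring
  calc (Real.log b - Real.log a) / 2 - 3 ≤ ∑ k ∈ Ico a b, (F (k + 1) - F k / 2) := by
        rw [sum_sub_distrib, ← sum_div]
        have := sum_Ico_sub F hab
        rw [sum_sub_distrib] at this
        linarith
    _ ≤ ∑ k ∈ Ico a b,
          ∑ p ∈ Ioc (2 ^ k : ℕ) (2 ^ (k + 1)) with p.Prime, (p : ℝ)⁻¹ :=
        sum_le_sum fun k _ => hblock k
    _ = ∑ p ∈ Ioc (2 ^ a : ℕ) (2 ^ b) with p.Prime, (p : ℝ)⁻¹ := by
        simp_rw [sum_filter]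
        exact (sum_Ioc_eq_sum_Ico_sum_Ioc _ (fun _ _ h => Nat.pow_le_pow_right two_pos h) hab).symm

theorem exists_exp_le_two_pow_and_log_le {t : ℝ} (ht : 1 ≤ t) :
    ∃ a : ℕ, 1 ≤ a ∧ Real.exp t ≤ 2 ^ a ∧ Real.log a ≤ Real.log t + 2 := by
  have hlog2 : 1 / 2 < Real.log 2 := by linarith [Real.log_two_gt_d9]
  refine ⟨⌈t / Real.log 2⌉₊, Nat.one_le_iff_ne_zero.2 (Nat.ceil_pos.2 (by positivity)).ne',
    ?_, ?_⟩
  · rw [← Real.exp_log (by positivity : (0 : ℝ) < 2 ^ _), Real.log_pow, Real.exp_le_exp,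
      ← div_le_iff₀ (by positivity)]
    exact Nat.le_ceil _
  have h3 : (⌈t / Real.log 2⌉₊ : ℝ) ≤ 3 * t := by
    have := Nat.ceil_lt_add_one (by positivity : 0 ≤ t / Real.log 2)
    have : t / Real.log 2 ≤ 2 * t := by
      rw [div_le_iff₀ (by positivity)]
      nlinarith
    linarith
  calc Real.log ⌈t / Real.log 2⌉₊ ≤ Real.log (3 * t) := Real.log_le_log (by positivity) h3
    _ = Real.log 3 + Real.log t := Real.log_mul (by norm_num) (by positivity)
    _ ≤ Real.log t + 2 := by linarith [Real.log_le_sub_one_of_pos (by norm_num : (0 : ℝ) < 3)]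

theorem exists_two_pow_le_and_log_log_le {x : ℝ} (hx : Real.exp 2 ≤ x) :
    ∃ b : ℕ, 1 ≤ b ∧ 2 ^ b ≤ ⌊x⌋₊ ∧ Real.log (Real.log x) - 1 ≤ Real.log b := by
  have hx0 : 0 < x := (Real.exp_pos 2).trans_le hx
  have hlogx : 2 ≤ Real.log x := (Real.le_log_iff_exp_le hx0).2 hx
  have hb : Real.log x / 2 ≤ ⌊Real.log x⌋₊ := by
    linarith [Nat.sub_one_lt_floor (Real.log x)]
  refine ⟨⌊Real.log x⌋₊, Nat.le_floor (by push_cast; linarith), Nat.le_floor ?_, ?_⟩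
  · calc ((2 ^ ⌊Real.log x⌋₊ : ℕ) : ℝ) ≤ Real.exp 1 ^ ⌊Real.log x⌋₊ := by
          push_cast
          gcongr
          linarith [Real.add_one_le_exp 1]
      _ = Real.exp ⌊Real.log x⌋₊ := by rw [← Real.exp_nat_mul, mul_one]
      _ ≤ x := (Real.exp_le_exp.2 (Nat.floor_le (by positivity))).trans_eq (Real.exp_log hx0)
  calc Real.log (Real.log x) - 1 ≤ Real.log (Real.log x) - Real.log 2 := by
        linarith [Real.log_two_lt_d9]
    _ = Real.log (Real.log x / 2) := (Real.log_div (by positivity) two_ne_zero).symm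
    _ ≤ Real.log ⌊Real.log x⌋₊ := Real.log_le_log (by positivity) hb

noncomputable def largePrimes (y : ℝ) (N : ℕ) : Finset ℕ :=
  {p ∈ Ioc 0 N | p.Prime ∧ y < p}

theorem log_log_sub_log_div_two_sub_five_le_sum_inv_largePrimes {x t : ℝ} (hx : Real.exp 2 ≤ x)
    (ht : 1 ≤ t) :
    (Real.log (Real.log x) - Real.log t) / 2 - 5 ≤
      ∑ p ∈ largePrimes (Real.exp t) ⌊x⌋₊, (p : ℝ)⁻¹ := by
  obtain ⟨a, ha, hta, hloga⟩ := exists_exp_le_two_pow_and_log_le ht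
  obtain ⟨b, hb, hbx, hlogb⟩ := exists_two_pow_le_and_log_log_le hx
  rcases le_or_gt a b with hab | hba
  · refine (le_trans ?_ (log_sub_log_div_two_sub_three_le_sum_inv_prime ha hab)).trans
      (sum_le_sum_of_subset_of_nonneg (fun p hp => ?_) fun _ _ _ => by positivity)
    · linarith
    obtain ⟨hp, hprime⟩ := mem_filter.1 hp
    obtain ⟨hap, hpb⟩ := mem_Ioc.1 hp
    exact mem_filter.2 ⟨mem_Ioc.2 ⟨(Nat.zero_le _).trans_lt hap, hpb.trans hbx⟩, hprime,
      hta.trans_lt (by exact_mod_cast hap)⟩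
  · have : Real.log b ≤ Real.log a :=
      Real.log_le_log (by exact_mod_cast hb) (by exact_mod_cast hba.le)
    have : 0 ≤ ∑ p ∈ largePrimes (Real.exp t) ⌊x⌋₊, (p : ℝ)⁻¹ :=
      sum_nonneg fun _ _ => by positivity
    linarith

theorem card_not_convenient_le {x y : ℝ} {J : ℕ} (hx : 0 ≤ x) (hy : 0 < y)
    (hJ : (J : ℝ) ≤ (∑ p ∈ largePrimes y ⌊x⌋₊, (p : ℝ)⁻¹) / 2) :
    (Nat.card {n : ℕ | 0 < n ∧ (n : ℝ) ≤ x ∧ ¬ Convenient x y J n} : ℝ) ≤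
      (2 / y + 12 / ∑ p ∈ largePrimes y ⌊x⌋₊, (p : ℝ)⁻¹) * x := by
  classical
  set N := ⌊x⌋₊
  set I := largePrimes y N
  set μ := ∑ p ∈ I, (p : ℝ)⁻¹
  have hI : ∀ p ∈ I, p.Prime := fun p hp => (mem_filter.1 hp).2.1
  have hIN : #I ≤ N := (card_filter_le _ _).trans (by simp)
  have hbad : {n : ℕ | 0 < n ∧ (n : ℝ) ≤ x ∧ ¬ Convenient x y J n} ⊆
      ↑({n ∈ Ioc 0 N | ∃ d : ℕ, y < d ∧ d ^ 2 ∣ n} ∪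
        {n ∈ Ioc 0 N | #{p ∈ I | p ∣ n} < J}) := by
    rintro n ⟨hn, hnx, hconv⟩
    have hnN : n ∈ Ioc 0 N := mem_Ioc.2 ⟨hn, Nat.le_floor hnx⟩
    by_contra hgood
    simp only [coe_union, coe_filter, Set.mem_union, Set.mem_ofPred_eq, hnN, true_and, not_or,
      not_exists, not_and, not_lt] at hgood
    refine hconv (convenient_of_le_card_primeFactors hn hnx (fun p _ hyp => hgood.1 p hyp) ?_)
    refine hgood.2.trans (card_le_card fun p hp => ?_)
    obtain ⟨hpI, hpn⟩ := mem_filter.1 hp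
    exact mem_filter.2
      ⟨Nat.mem_primeFactors.2 ⟨hI p hpI, hpn, hn.ne'⟩, (mem_filter.1 hpI).2.2⟩
  have hNx : (N : ℝ) ≤ x := Nat.floor_le hx
  calc (Nat.card {n : ℕ | 0 < n ∧ (n : ℝ) ≤ x ∧ ¬ Convenient x y J n} : ℝ)
      ≤ #{n ∈ Ioc 0 N | ∃ d : ℕ, y < d ∧ d ^ 2 ∣ n} +
          #{n ∈ Ioc 0 N | #{p ∈ I | p ∣ n} < J} := by
        rw [Nat.card_coe_set_eq]
        exact_mod_cast (Set.ncard_le_ncard hbad (finite_toSet _)).trans_eq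
          (Set.ncard_coe_finset _) |>.trans (card_union_le _ _)
    _ ≤ 2 * N / y + 12 * N / μ := add_le_add (card_filter_exists_sq_dvd_le hy N)
        (card_filter_card_filter_dvd_lt_le N hI hIN hJ)
    _ ≤ (2 / y + 12 / μ) * x := by
        have : 0 ≤ μ := sum_nonneg fun _ _ => by positivity
        rw [add_mul, mul_div_right_comm, mul_div_right_comm (12 : ℝ)]
        gcongr

theorem eventually_floor_log_log_log_le :
    ∀ᶠ x : ℝ in atTop,
      (⌊Real.log (Real.log (Real.log x))⌋₊ : ℝ) ≤
        (Real.log (Real.log x) / 4 - 5) / 2 := by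
  have hloglog := Real.tendsto_log_atTop.comp Real.tendsto_log_atTop
  filter_upwards [hloglog.eventually (Real.isLittleO_log_id_atTop.bound (c := 1 / 16)
    (by norm_num)), hloglog.eventually_ge_atTop 80] with x hlog hll
  simp only [Function.comp_apply, id, Real.norm_eq_abs] at hlog hll
  rw [abs_of_nonneg (by linarith : (0 : ℝ) ≤ Real.log (Real.log x))] at hlog
  have := Nat.floor_le (Real.log_nonneg (by linarith : (1 : ℝ) ≤ Real.log (Real.log x)))
  linarith [le_abs_self (Real.log (Real.log (Real.log x)))]

/-- With `J = ⌊log log log x⌋` and `y = exp((log x)^(ε/2))`, the number of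
inconvenient `n ≤ x` is `o(x)` as `x → ∞`. -/
theorem stmt10 (ε : ℝ) (hε0 : 0 < ε) (hε1 : ε ≤ 1) :
    Tendsto (fun x : ℝ =>
      (Nat.card {n : ℕ | 0 < n ∧ (n : ℝ) ≤ x ∧
          ¬ Convenient x (Real.exp ((Real.log x) ^ (ε / 2)))
              ⌊Real.log (Real.log (Real.log x))⌋₊ n} : ℝ) / x)
      atTop (nhds 0) := by
  set t : ℝ → ℝ := fun x => Real.log x ^ (ε / 2)
  set μ : ℝ → ℝ := fun x => ∑ p ∈ largePrimes (Real.exp (t x)) ⌊x⌋₊, (p : ℝ)⁻¹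
  have ht : Tendsto t atTop atTop := (tendsto_rpow_atTop (by linarith)).comp Real.tendsto_log_atTop
  have hloglog : Tendsto (fun x => Real.log (Real.log x)) atTop atTop :=
    Real.tendsto_log_atTop.comp Real.tendsto_log_atTop
  have hμ : ∀ᶠ x in atTop, Real.log (Real.log x) / 4 - 5 ≤ μ x := by
    filter_upwards [eventually_ge_atTop (Real.exp 2), ht.eventually_ge_atTop 1,
      hloglog.eventually_ge_atTop 0] with x hx htx hll
    refine le_trans ?_ (log_log_sub_log_div_two_sub_five_le_sum_inv_largePrimes hx htx)
    rw [Real.log_rpow (Real.log_pos (by linarith [Real.add_one_le_exp 2]))]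
    nlinarith
  have hμtop : Tendsto μ atTop atTop := tendsto_atTop_mono' _ hμ
    (tendsto_atTop_add_const_right _ _ (hloglog.atTop_div_const (by norm_num)))
  have hbound : Tendsto (fun x => 2 / Real.exp (t x) + 12 / μ x) atTop (nhds 0) := by
    simpa using (tendsto_const_nhds.div_atTop (Real.tendsto_exp_atTop.comp ht)).add
      (tendsto_const_nhds.div_atTop hμtop)
  refine squeeze_zero' ?_ ?_ hbound
  · filter_upwards [eventually_gt_atTop 0] with x hx
    positivity
  · filter_upwards [hμ, eventually_floor_log_log_log_le, eventually_gt_atTop 0] with x hμx hJ hx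
    rw [div_le_iff₀ hx]
    exact card_not_convenient_le hx.le (Real.exp_pos _) (hJ.trans (by linarith))
end
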